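/- arXiv:1303.0523 — 2 statements merged into one kernel-verified Lean document; each statement's English description precedes it below -/
import Mathlib

section
/- Let G be a finite connected graph with n ≥ 2 vertices and maximum degree Δ ≥ 1. Then VR(G, 1) ≤ 1 − 1/Δ + 1/(nΔ). -/
open SimpleGraph

variable {V : Type*}

/-- Distance from a vertex to a finite set of vertices (`⊤` if the set is empty). -/
noncomputable def distToSet (G : SimpleGraph V) (S : Finset V) (v : V) : ℕ∞ :=
  S.inf fun a => (G.dist a v : ℕ∞)

/-- Player A's Voronoi score. -/
noncomputable def scoreA [Fintype V] (G : SimpleGraph V) (A B : Finset V) : ℝ :=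
  ∑ v : V,
    if distToSet G A v < distToSet G B v then 1
    else if distToSet G A v = distToSet G B v then 1/2 else 0

/-- Player B's Voronoi score. -/
noncomputable def scoreB [Fintype V] (G : SimpleGraph V) (A B : Finset V) : ℝ :=
  ∑ v : V,
    if distToSet G B v < distToSet G A v then 1
    else if distToSet G B v = distToSet G A v then 1/2 else 0

/-- Minimax value (A's score under optimal play) of the Voronoi game with `t`
remaining rounds, given the sets of vertices already claimed by A and B. -/
noncomputable def gameValue [Fintype V] [DecidableEq V] (G : SimpleGraph V) :
    ℕ → Finset V → Finset V → ℝ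
  | 0, A, B => scoreA G A B
  | (t+1), A, B =>
      sSup {r : ℝ | ∃ a, a ∉ A ∧ a ∉ B ∧
        r = sInf {s : ℝ | ∃ b, b ∉ insert a A ∧ b ∉ B ∧
          s = gameValue G t (insert a A) (insert b B)}}

/-- The Voronoi ratio of `G` for a `t`-round game. -/
noncomputable def VR [Fintype V] [DecidableEq V] (G : SimpleGraph V) (t : ℕ) : ℝ :=
  gameValue G t ∅ ∅ / (Fintype.card V)

lemma scoreA_nonneg [Fintype V] (G : SimpleGraph V) (A B : Finset V) :
    0 ≤ scoreA G A B := by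
  apply Finset.sum_nonneg
  intro v _
  split_ifs <;> norm_num

lemma score_add [Fintype V] (G : SimpleGraph V) (A B : Finset V) :
    scoreA G A B + scoreB G A B = Fintype.card V := by
  unfold scoreA scoreB
  rw [← Finset.sum_add_distrib]
  have h : ∀ v : V, ((if distToSet G A v < distToSet G B v then (1:ℝ)
      else if distToSet G A v = distToSet G B v then 1/2 else 0) +
      (if distToSet G B v < distToSet G A v then 1
      else if distToSet G B v = distToSet G A v then 1/2 else 0)) = 1 := by
    intro v
    rcases lt_trichotomy (distToSet G A v) (distToSet G B v) with h | h | h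
    · rw [if_pos h, if_neg (not_lt_of_gt h), if_neg h.ne']; ring
    · rw [if_neg (h ▸ lt_irrefl _), if_pos h, if_neg (h ▸ lt_irrefl _), if_pos h.symm]; ring
    · rw [if_neg (not_lt_of_gt h), if_neg h.ne', if_pos h]; ring
  rw [Finset.sum_congr rfl (fun v _ => h v)]
  simp

lemma step_lemma (G : SimpleGraph V) (hconn : G.Connected) (a v : V) (hne : v ≠ a) :
    ∃ u, G.Adj a u ∧ G.dist u v < G.dist a v := by
  obtain ⟨p, hp⟩ := hconn.exists_walk_length_eq_dist a v
  cases p with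
  | nil => exact absurd rfl hne
  | cons h q =>
    refine ⟨_, h, ?_⟩
    have h1 := SimpleGraph.dist_le q
    simp only [SimpleGraph.Walk.length_cons] at hp
    omega


/-- A finite connected graph `G` with `n ≥ 2` vertices and maximum degree
`Δ ≥ 1` satisfies `VR(G, 1) ≤ 1 − 1/Δ + 1/(nΔ)`. -/
theorem vr_max_degree_one_round {V : Type*} [Fintype V] [DecidableEq V]
    (G : SimpleGraph V) (hconn : G.Connected) (n Δ : ℕ)
    (hn : n = Fintype.card V) (h2 : 2 ≤ n) (hΔ : 1 ≤ Δ)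
    (hdeg : ∀ v : V, (G.neighborSet v).ncard ≤ Δ)
    (hmax : ∃ v : V, (G.neighborSet v).ncard = Δ) :
    VR G 1 ≤ 1 - 1 / (Δ : ℝ) + 1 / ((n : ℝ) * Δ) := by
  classical
  have hΔR : (0:ℝ) < Δ := by exact_mod_cast hΔ
  have hnR : (0:ℝ) < n := by positivity
  set c : ℝ := (n : ℝ) - ((n : ℝ) - 1) / Δ with hc
  have hΔ1 : (1:ℝ) ≤ Δ := by exact_mod_cast hΔ
  have hcnn : 0 ≤ c := by
    rw [hc, sub_nonneg, div_le_iff₀ hΔR]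
    nlinarith [mul_le_mul_of_nonneg_left hΔ1 hnR.le]
  -- key per-move bound
  have key : ∀ a : V, ∃ b : V, b ≠ a ∧ scoreA G {a} {b} ≤ c := by
    intro a
    set N : Finset V := (G.neighborSet a).toFinset with hN
    have hNcard : N.card ≤ Δ := by
      rw [hN, ← Set.ncard_eq_toFinset_card']; exact hdeg a
    have hstep : ∀ v : V, v ≠ a → ∃ u, G.Adj a u ∧ G.dist u v < G.dist a v :=
      fun v hv => step_lemma G hconn a v hv
    set f : V → V := fun v => if h : v = a then a else (hstep v h).choose with hf
    have hfspec : ∀ v : V, v ≠ a → G.Adj a (f v) ∧ G.dist (f v) v < G.dist a v := by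
      intro v hv
      simp only [hf, dif_neg hv]
      exact (hstep v hv).choose_spec
    set s : Finset V := Finset.univ.erase a with hs
    have hscard : s.card = n - 1 := by
      rw [hs, Finset.card_erase_of_mem (Finset.mem_univ a), Finset.card_univ, ← hn]
    have hmaps : ∀ v ∈ s, f v ∈ N := by
      intro v hv
      have hva : v ≠ a := Finset.ne_of_mem_erase hv
      simp only [hN, Set.mem_toFinset, SimpleGraph.mem_neighborSet]
      exact (hfspec v hva).1
    have hsum : s.card = ∑ b ∈ N, (s.filter (fun v => f v = b)).card :=
      Finset.card_eq_sum_card_fiberwise hmaps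
    -- pigeonhole
    have hpig : ∃ b ∈ N, n - 1 ≤ Δ * (s.filter (fun v => f v = b)).card := by
      by_contra hcon
      push_neg at hcon
      have h7 : Δ * (n - 1) ≤ N.card * (n - 1 - 1) := by
        calc Δ * (n-1) = Δ * s.card := by rw [hscard]
          _ = ∑ b ∈ N, Δ * (s.filter (fun v => f v = b)).card := by
                rw [hsum, Finset.mul_sum]
          _ ≤ ∑ _b ∈ N, (n - 1 - 1) := by
                apply Finset.sum_le_sum
                intro b hb
                exact Nat.le_pred_of_lt (hcon b hb)
          _ = N.card * (n - 1 - 1) := by rw [Finset.sum_const, smul_eq_mul]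
      have h4 : N.card * (n - 1 - 1) ≤ Δ * (n - 1 - 1) := Nat.mul_le_mul_right _ hNcard
      have h9 : Δ * (n - 1 - 1) < Δ * (n - 1) :=
        mul_lt_mul_of_pos_left (by omega) (by omega)
      have := le_trans h7 h4
      omega
    obtain ⟨b, hbN, hfib⟩ := hpig
    have hadj : G.Adj a b := by
      rw [hN, Set.mem_toFinset, SimpleGraph.mem_neighborSet] at hbN
      exact hbN
    refine ⟨b, (G.ne_of_adj hadj).symm, ?_⟩
    set F : Finset V := s.filter (fun v => f v = b) with hF
    -- B wins every vertex of F
    have hBwin : ∀ v ∈ F, distToSet G {b} v < distToSet G {a} v := by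
      intro v hv
      rw [hF, Finset.mem_filter] at hv
      obtain ⟨hvs, hfv⟩ := hv
      have hva : v ≠ a := Finset.ne_of_mem_erase hvs
      have := (hfspec v hva).2
      rw [hfv] at this
      simp only [distToSet, Finset.inf_singleton]
      exact_mod_cast this
    have hFB : (F.card : ℝ) ≤ scoreB G {a} {b} := by
      unfold scoreB
      calc (F.card : ℝ) = ∑ v ∈ F, (1:ℝ) := by simp
        _ = ∑ v ∈ F, (if distToSet G {b} v < distToSet G {a} v then (1:ℝ)
            else if distToSet G {b} v = distToSet G {a} v then 1/2 else 0) := by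
            refine Finset.sum_congr rfl fun v hv => ?_
            rw [if_pos (hBwin v hv)]
        _ ≤ ∑ v : V, (if distToSet G {b} v < distToSet G {a} v then (1:ℝ)
            else if distToSet G {b} v = distToSet G {a} v then 1/2 else 0) := by
            apply Finset.sum_le_sum_of_subset_of_nonneg (Finset.subset_univ F)
            intro v _ _
            split_ifs <;> norm_num
    have hFc : ((n : ℝ) - 1) / Δ ≤ (F.card : ℝ) := by
      rw [div_le_iff₀ hΔR]
      have : ((n - 1 : ℕ) : ℝ) ≤ ((Δ * F.card : ℕ) : ℝ) := by exact_mod_cast hfib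
      push_cast [Nat.cast_sub (by omega : 1 ≤ n)] at this
      linarith
    have hsab := score_add G {a} {b}
    rw [← hn] at hsab
    rw [hc]
    linarith
  -- unfold the game value
  have hgv : gameValue G 1 (∅ : Finset V) (∅ : Finset V) ≤ c := by
    show sSup _ ≤ c
    apply Real.sSup_le _ hcnn
    rintro r ⟨a, -, -, rfl⟩
    obtain ⟨b, hba, hble⟩ := key a
    have hbdd : BddBelow {s : ℝ | ∃ b', b' ∉ insert a (∅ : Finset V) ∧ b' ∉ (∅ : Finset V) ∧
        s = gameValue G 0 (insert a ∅) (insert b' ∅)} := by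
      refine ⟨0, ?_⟩
      rintro x ⟨b', -, -, rfl⟩
      exact scoreA_nonneg G _ _
    have hmem : gameValue G 0 (insert a ∅) (insert b ∅) ∈
        {s : ℝ | ∃ b', b' ∉ insert a (∅ : Finset V) ∧ b' ∉ (∅ : Finset V) ∧
          s = gameValue G 0 (insert a ∅) (insert b' ∅)} := by
      exact ⟨b, by simp [hba], by simp, rfl⟩
    refine le_trans (csInf_le hbdd hmem) ?_
    show scoreA G (insert a ∅) (insert b ∅) ≤ c
    simpa using hble
  -- conclude
  unfold VR
  rw [← hn, div_le_iff₀ hnR]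
  have hgoal : (1 - 1 / (Δ:ℝ) + 1 / ((n:ℝ) * Δ)) * n = c := by
    rw [hc]
    field_simp
    ring
  rw [hgoal]
  exact hgv
end

section
/- Let d ≥ 2 and L ≥ 1 be integers, let H = { x ∈ ℤ^d : 0 ≤ x_i ≤ L for all i, and x₁ + ⋯ + x_d ≥ L }, and let G be the 'grid-connected cycles' graph built from H as follows: each point x ∈ H is replaced by a cycle (ring) of 2d nodes labeled x(1⁺), x(1⁻), x(2⁺), x(2⁻), …, x(d⁺), x(d⁻) in this cyclic order, and for each i ∈ {1,…,d} and each x ∈ H with x + e_i ∈ H (where e_i is the i-th standard unit vector), the node x(i⁺) is joined to (x+e_i)(i⁻) by a path of 6d − 1 edges whose 6d − 2 internal vertices are new. Then for any two ring nodes u = x(p^±) and v = y(q^±) of G, one has 6d·‖x − y‖₁ − 1 ≤ dist_G(u, v) ≤ 6d·‖x − y‖₁ + 5d, where ‖·‖₁ is the L₁ norm on ℤ^d and dist_G denotes graph distance in G. -/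
/-!
Lower bound: on ring nodes take the potential `6d·‖z − y‖₁` minus one at the ports of `z`
that lead one step closer to `y`. It changes by exactly `6d − 1`, the length of the path,
across every connection path, so interpolating it linearly along the paths gives a
1-Lipschitz function on the graph; it vanishes at `y(q)` and is at least `6d‖x − y‖₁ − 1`
at `x(p)`.

Upper bound: `H` is closed under `⊔` and order-convex, so one can walk inside `H` from `x` up
to `x ⊔ y` and then down to `y`. Raising a coordinate by one costs `6d` (a connection path
and one ring step back to the port), and one turn around the ring, raising each coordinate
as its port passes, costs `6d · (total rise) + 2d`. Two such turns (the descent is an ascent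
from `y` walked backwards) and at most `d` ring steps to reach the position `q` give
`6d‖x − y‖₁ + 5d`.
-/

open SimpleGraph

/-- The cube `{0, …, L}^d` in `ℤ^d` with the corner below the hyperplane
`x₁ + ⋯ + x_d = L` cut off. -/
def cornerCutCube (d L : ℕ) : Set (Fin d → ℤ) :=
  {x | (∀ i, 0 ≤ x i ∧ x i ≤ (L : ℤ)) ∧ (L : ℤ) ≤ ∑ i, x i}

/-- The `i`-th standard unit vector of `ℤ^d`. -/
def unitVec (d : ℕ) (i : Fin d) : Fin d → ℤ := fun j => if j = i then 1 else 0

/-- Index type for the connection paths: a grid point `x ∈ H` together with a direction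
`i` such that `x + eᵢ ∈ H`. -/
abbrev ConnIdx (d L : ℕ) : Type :=
  {q : (Fin d → ℤ) × Fin d //
    q.1 ∈ cornerCutCube d L ∧ q.1 + unitVec d q.2 ∈ cornerCutCube d L}

/-- Vertices of the grid-connected-cycles graph: ring nodes — a grid point of `H`
together with a position on its ring of `2d` nodes, position `2i` being `x(i⁺)` and
position `2i + 1` being `x(i⁻)` (in the cyclic order `1⁺, 1⁻, 2⁺, 2⁻, …`) — plus the
`6d − 2` internal vertices of each connection path. -/
abbrev GCCVertex (d L : ℕ) : Type :=
  (↥(cornerCutCube d L) × Fin (2 * d)) ⊕ (ConnIdx d L × Fin (6 * d - 2))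

/-- Generating relation for the edges of the grid-connected-cycles graph:
ring edges (consecutive positions, cyclically), the edge from `x(i⁺)` to the first
internal vertex of the connection path of `(x, i)`, the `6d − 3` edges between
consecutive internal vertices, and the edge from the last internal vertex to
`(x + eᵢ)(i⁻)`; each connection path thus has `6d − 1` edges. -/
def gccRel (d L : ℕ) : GCCVertex d L → GCCVertex d L → Prop
  | .inl (x, r), .inl (y, s) =>
      x = y ∧ (((r : ℕ) + 1 = (s : ℕ)) ∨ ((r : ℕ) = 2 * d - 1 ∧ (s : ℕ) = 0))
  | .inl (x, r), .inr (⟨⟨z, i⟩, _⟩, k) =>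
      (x : Fin d → ℤ) = z ∧ (r : ℕ) = 2 * (i : ℕ) ∧ (k : ℕ) = 0
  | .inr (⟨⟨z, i⟩, _⟩, k), .inl (y, s) =>
      (y : Fin d → ℤ) = z + unitVec d i ∧ (s : ℕ) = 2 * (i : ℕ) + 1 ∧
        (k : ℕ) = 6 * d - 3
  | .inr (c, k), .inr (c', k') => c = c' ∧ (k : ℕ) + 1 = (k' : ℕ)

/-- The grid-connected-cycles graph over the corner-cut cube. -/
def gccGraph (d L : ℕ) : SimpleGraph (GCCVertex d L) := SimpleGraph.fromRel (gccRel d L)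

namespace SimpleGraph

variable {V : Type*} {G : SimpleGraph V}

theorem Walk.le_add_length (f : V → ℤ)
    (hf : ∀ u v, G.Adj u v → f u ≤ f v + 1) {u v : V} (w : G.Walk u v) :
    f u ≤ f v + w.length := by
  induction w with
  | nil => simp
  | cons h _ ih =>
    have := hf _ _ h
    rw [Walk.length_cons]
    push_cast
    omega

theorem Reachable.le_add_dist (f : V → ℤ)
    (hf : ∀ u v, G.Adj u v → f u ≤ f v + 1) {u v : V} (h : G.Reachable u v) :
    f u ≤ f v + G.dist u v := by
  obtain ⟨w, hw⟩ := h.exists_walk_length_eq_dist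
  simpa [hw] using w.le_add_length f hf

theorem edist_le_of_le_add {u v w : V} {m n k : ℕ}
    (h₁ : G.edist u v ≤ m) (h₂ : G.edist v w ≤ n) (hk : m + n ≤ k) : G.edist u w ≤ k :=
  G.edist_triangle.trans <| (add_le_add h₁ h₂).trans <| by exact_mod_cast hk

theorem Adj.edist_le_one {u v : V} (h : G.Adj u v) :
    G.edist u v ≤ (1 : ℕ) :=
  (edist_eq_one_iff_adj.mpr h).le

end SimpleGraph

section

variable {d L : ℕ}

def l1Dist (x y : Fin d → ℤ) : ℕ := ∑ i, (x i - y i).natAbs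

theorem natCast_l1Dist (x y : Fin d → ℤ) : (l1Dist x y : ℤ) = ∑ i, |x i - y i| := by
  simp [l1Dist]

theorem l1Dist_self (x : Fin d → ℤ) : l1Dist x x = 0 := by
  simp [l1Dist]

theorem l1Dist_add_l1Dist_of_le {x y z : Fin d → ℤ} (hxy : x ≤ y) (hyz : y ≤ z) :
    l1Dist x y + l1Dist y z = l1Dist x z := by
  simp only [l1Dist, ← Finset.sum_add_distrib]
  refine Finset.sum_congr rfl fun i _ => ?_
  have hxyi : x i ≤ y i := hxy i
  have hyzi : y i ≤ z i := hyz i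
  omega

theorem l1Dist_sup_add_l1Dist_sup (x y : Fin d → ℤ) :
    l1Dist x (x ⊔ y) + l1Dist y (x ⊔ y) = l1Dist x y := by
  simp only [l1Dist, ← Finset.sum_add_distrib, Pi.sup_apply]
  refine Finset.sum_congr rfl fun i _ => ?_
  rcases le_total (x i) (y i) with h | h
  · rw [sup_of_le_right h]; omega
  · rw [sup_of_le_left h]; omega

theorem l1Dist_eq_natAbs_of_forall_ne {x y : Fin d → ℤ} (i : Fin d)
    (h : ∀ j ≠ i, x j = y j) : l1Dist x y = (x i - y i).natAbs :=
  Finset.sum_eq_single i (fun j _ hj => by simp [h j hj]) (by simp)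

theorem unitVec_apply (i j : Fin d) : unitVec d i j = if j = i then 1 else 0 := rfl

theorem l1Dist_add_unitVec (z y : Fin d → ℤ) (i : Fin d) :
    (l1Dist (z + unitVec d i) y : ℤ) = l1Dist z y + if z i < y i then -1 else 1 := by
  have hcoord : ∀ j, |(z + unitVec d i) j - y j| - |z j - y j| =
      if j = i then (if z i < y i then -1 else 1) else 0 := by
    intro j
    rw [Pi.add_apply, unitVec_apply]
    by_cases hj : j = i
    · subst hj
      split_ifs <;> rw [abs_eq_max_neg, abs_eq_max_neg] <;> omega
    · simp [hj]
  rw [natCast_l1Dist, natCast_l1Dist, ← sub_eq_iff_eq_add', ← Finset.sum_sub_distrib,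
    Finset.sum_congr rfl fun j _ => hcoord j, Finset.sum_ite_eq' Finset.univ i,
    if_pos (Finset.mem_univ i)]

theorem cornerCutCube_ordConnected : (cornerCutCube d L).OrdConnected :=
  ⟨fun _ hx _ hy _ ⟨hxv, hvy⟩ =>
    ⟨fun i => ⟨(hx.1 i).1.trans (hxv i), (hvy i).trans (hy.1 i).2⟩,
      hx.2.trans (Finset.sum_le_sum fun i _ => hxv i)⟩⟩

theorem cornerCutCube_supClosed : SupClosed (cornerCutCube d L) :=
  fun _ hx _ hy =>
    ⟨fun i => ⟨(hx.1 i).1.trans le_sup_left, sup_le (hx.1 i).2 (hy.1 i).2⟩,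
      hx.2.trans (Finset.sum_le_sum fun _ _ => le_sup_left)⟩

def towardIndicator (y z : Fin d → ℤ) (r : ℕ) : ℤ :=
  if ∃ i : Fin d, (r = 2 * i ∧ z i < y i) ∨ (r = 2 * i + 1 ∧ y i < z i) then 1 else 0

theorem towardIndicator_nonneg (y z : Fin d → ℤ) (r : ℕ) : 0 ≤ towardIndicator y z r := by
  unfold towardIndicator; split_ifs <;> norm_num

theorem towardIndicator_le_one (y z : Fin d → ℤ) (r : ℕ) : towardIndicator y z r ≤ 1 := by
  unfold towardIndicator; split_ifs <;> norm_num

theorem towardIndicator_two_mul (y z : Fin d → ℤ) (i : Fin d) :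
    towardIndicator y z (2 * i) = if z i < y i then 1 else 0 := by
  have hinj : ∀ j : Fin d, 2 * (i : ℕ) = 2 * j → j = i := fun j h => Fin.ext (by omega)
  unfold towardIndicator
  congr 1
  refine propext ⟨?_, fun h => ⟨i, .inl ⟨rfl, h⟩⟩⟩
  rintro ⟨j, ⟨hj, hlt⟩ | ⟨hj, -⟩⟩
  · exact hinj j hj ▸ hlt
  · omega

theorem towardIndicator_two_mul_add_one (y z : Fin d → ℤ) (i : Fin d) :
    towardIndicator y z (2 * i + 1) = if y i < z i then 1 else 0 := by
  have hinj : ∀ j : Fin d, 2 * (i : ℕ) + 1 = 2 * j + 1 → j = i :=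
    fun j h => Fin.ext (by omega)
  unfold towardIndicator
  congr 1
  refine propext ⟨?_, fun h => ⟨i, .inr ⟨rfl, h⟩⟩⟩
  rintro ⟨j, ⟨hj, -⟩ | ⟨hj, hlt⟩⟩
  · omega
  · exact hinj j hj ▸ hlt

def ringPotential (y z : Fin d → ℤ) (r : ℕ) : ℤ :=
  6 * d * l1Dist z y - towardIndicator y z r

theorem abs_ringPotential_sub_add_unitVec_le (y z : Fin d → ℤ) (i : Fin d) :
    |ringPotential y z (2 * i) - ringPotential y (z + unitVec d i) (2 * i + 1)| ≤ 6 * d - 1 := by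
  have hd : (1 : ℤ) ≤ d := by exact_mod_cast i.pos
  unfold ringPotential
  rw [l1Dist_add_unitVec, towardIndicator_two_mul, towardIndicator_two_mul_add_one, Pi.add_apply,
    unitVec_apply, if_pos rfl, abs_le]
  by_cases h : z i < y i
  · rw [if_pos h, if_pos h, if_neg (by omega)]
    constructor <;> linarith
  · rw [if_neg h, if_neg h, if_pos (by omega)]
    constructor <;> linarith

def gccPotential (y : Fin d → ℤ) : GCCVertex d L → ℤ
  | .inl (z, r) => ringPotential y z r
  | .inr (c, k) =>
      min (ringPotential y c.1.1 (2 * c.1.2) + (k + 1))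
        (ringPotential y (c.1.1 + unitVec d c.1.2) (2 * c.1.2 + 1) + (6 * d - 2 - k))

theorem abs_gccPotential_sub_le_one (y : Fin d → ℤ) {u v : GCCVertex d L}
    (h : gccRel d L u v) : |gccPotential y u - gccPotential y v| ≤ 1 := by
  rw [abs_le]
  rcases u with ⟨z, r⟩ | ⟨⟨⟨z, i⟩, hc⟩, k⟩ <;>
    rcases v with ⟨z', r'⟩ | ⟨⟨⟨z', i'⟩, hc'⟩, k'⟩
  · obtain ⟨rfl, -⟩ := h
    have := towardIndicator_nonneg y z r
    have := towardIndicator_le_one y z r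
    have := towardIndicator_nonneg y z r'
    have := towardIndicator_le_one y z r'
    simp only [gccPotential, ringPotential]
    omega
  · obtain ⟨rfl, hr, hk⟩ := h
    have := abs_le.mp (abs_ringPotential_sub_add_unitVec_le y z i')
    simp only [gccPotential, hr, hk]
    omega
  · obtain ⟨hz, hr, hk⟩ := h
    have := abs_le.mp (abs_ringPotential_sub_add_unitVec_le y z i)
    simp only [gccPotential, hz, hr, hk]
    omega
  · obtain ⟨hcc, hk⟩ := h
    obtain ⟨rfl, rfl⟩ := Prod.ext_iff.mp (congrArg Subtype.val hcc)
    simp only [gccPotential]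
    omega

theorem gccPotential_le_add_one_of_adj (y : Fin d → ℤ) {u v : GCCVertex d L}
    (h : (gccGraph d L).Adj u v) : gccPotential y u ≤ gccPotential y v + 1 := by
  rw [gccGraph, fromRel_adj] at h
  rcases h.2 with h | h
  · have := abs_le.mp (abs_gccPotential_sub_le_one y h); omega
  · have := abs_le.mp (abs_gccPotential_sub_le_one y h); omega

theorem six_mul_l1Dist_sub_one_le_gccGraph_dist {x y : Fin d → ℤ} (hx : x ∈ cornerCutCube d L)
    (hy : y ∈ cornerCutCube d L) (p q : Fin (2 * d))
    (h : (gccGraph d L).Reachable (.inl (⟨x, hx⟩, p)) (.inl (⟨y, hy⟩, q))) :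
    6 * d * (l1Dist x y : ℤ) - 1 ≤
      (gccGraph d L).dist (.inl (⟨x, hx⟩, p)) (.inl (⟨y, hy⟩, q)) := by
  have hlip := h.le_add_dist (gccPotential y) fun _ _ => gccPotential_le_add_one_of_adj y
  have hx' := towardIndicator_le_one y x p
  have hy' : towardIndicator y y q = 0 := by simp [towardIndicator]
  simp only [gccPotential, ringPotential, l1Dist_self] at hlip
  omega

theorem gccGraph_adj_ring_succ (z : cornerCutCube d L) {r : ℕ} (hr : r + 1 < 2 * d) :
    (gccGraph d L).Adj (.inl (z, ⟨r, by omega⟩)) (.inl (z, ⟨r + 1, hr⟩)) := by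
  rw [gccGraph, fromRel_adj]
  exact ⟨by simp, .inl ⟨rfl, .inl rfl⟩⟩

theorem gccGraph_adj_ring_wrap (z : cornerCutCube d L) (hd : 0 < d) :
    (gccGraph d L).Adj (.inl (z, ⟨2 * d - 1, by omega⟩)) (.inl (z, ⟨0, by omega⟩)) := by
  rw [gccGraph, fromRel_adj]
  exact ⟨by simp; omega, .inl ⟨rfl, .inr ⟨rfl, rfl⟩⟩⟩

theorem gccGraph_edist_connection_le {z : Fin d → ℤ} (hz : z ∈ cornerCutCube d L) (i : Fin d)
    (hz' : z + unitVec d i ∈ cornerCutCube d L) :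
    (gccGraph d L).edist (.inl (⟨z, hz⟩, ⟨2 * i, by omega⟩))
      (.inl (⟨z + unitVec d i, hz'⟩, ⟨2 * i + 1, by omega⟩)) ≤ (6 * d - 1 : ℕ) := by
  have hd := i.pos
  let c : ConnIdx d L := ⟨(z, i), hz, hz'⟩
  have hinternal : ∀ k (hk : k < 6 * d - 2),
      (gccGraph d L).edist (.inr (c, ⟨0, by omega⟩)) (.inr (c, ⟨k, hk⟩)) ≤ k := by
    intro k
    induction k with
    | zero => simp
    | succ k ih =>
      intro hk
      refine edist_le_of_le_add (ih (by omega)) (Adj.edist_le_one ?_) le_rfl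
      rw [gccGraph, fromRel_adj]
      exact ⟨by simp, .inl ⟨rfl, rfl⟩⟩
  have hfirst : (gccGraph d L).Adj (.inl (⟨z, hz⟩, ⟨2 * i, by omega⟩))
      (.inr (c, ⟨0, by omega⟩)) := by
    rw [gccGraph, fromRel_adj]
    exact ⟨by simp, .inl ⟨rfl, rfl, rfl⟩⟩
  have hlast : (gccGraph d L).Adj (.inr (c, ⟨6 * d - 3, by omega⟩))
      (.inl (⟨z + unitVec d i, hz'⟩, ⟨2 * i + 1, by omega⟩)) := by
    rw [gccGraph, fromRel_adj]
    exact ⟨by simp, .inl ⟨rfl, rfl, rfl⟩⟩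
  exact edist_le_of_le_add
    (edist_le_of_le_add hfirst.edist_le_one (hinternal _ (by omega)) le_rfl)
    hlast.edist_le_one (by omega)

theorem gccGraph_edist_port_le (i : Fin d) (n : ℕ) {v w : Fin d → ℤ}
    (hv : v ∈ cornerCutCube d L) (hw : w ∈ cornerCutCube d L)
    (hvw : ∀ j ≠ i, v j = w j) (hwi : w i = v i + n) :
    (gccGraph d L).edist (.inl (⟨v, hv⟩, ⟨2 * i, by omega⟩))
      (.inl (⟨w, hw⟩, ⟨2 * i, by omega⟩)) ≤ (6 * d * n : ℕ) := by
  induction n generalizing w with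
  | zero =>
    obtain rfl : v = w := funext fun j => by
      by_cases hj : j = i
      · subst hj; omega
      · exact hvw j hj
    simp
  | succ n ih =>
    have hw' : w - unitVec d i ∈ cornerCutCube d L := by
      refine cornerCutCube_ordConnected.out hv hw ⟨fun j => ?_, fun j => ?_⟩
      · by_cases hj : j = i
        · subst hj; simp [unitVec]; omega
        · simp [unitVec, hj, hvw j hj]
      · simp only [unitVec, Pi.sub_apply, sub_le_self_iff]
        split_ifs <;> norm_num
    have hstep := ih hw' (fun j hj => by simp [unitVec, hj, hvw j hj])
      (by simp [unitVec, hwi]; ring)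
    have hcross := gccGraph_edist_connection_le hw' i (by rwa [sub_add_cancel])
    simp only [sub_add_cancel] at hcross
    have hback := (gccGraph_adj_ring_succ ⟨w, hw⟩ (r := 2 * i) (by omega)).symm.edist_le_one
    exact edist_le_of_le_add (edist_le_of_le_add hstep hcross le_rfl) hback
      (by have := i.pos; rw [Nat.mul_succ]; omega)

theorem gccGraph_edist_sweep_le {r r' : ℕ} (hrr' : r ≤ r') (hr' : r' < 2 * d)
    {z w : Fin d → ℤ} (hz : z ∈ cornerCutCube d L) (hw : w ∈ cornerCutCube d L) (hzw : z ≤ w)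
    (hsupp : ∀ j : Fin d, z j ≠ w j → r ≤ 2 * j ∧ 2 * j < r') :
    (gccGraph d L).edist (.inl (⟨z, hz⟩, ⟨r, by omega⟩)) (.inl (⟨w, hw⟩, ⟨r', hr'⟩)) ≤
      (6 * d * l1Dist z w + (r' - r) : ℕ) := by
  induction r', hrr' using Nat.le_induction generalizing w with
  | base =>
    obtain rfl : z = w := funext fun j => by
      by_contra h
      have := hsupp j h
      omega
    simp
  | succ r' hrr' ih =>
    let v : Fin d → ℤ := fun j => if 2 * (j : ℕ) = r' then z j else w j
    have hzv : z ≤ v := fun j => by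
      by_cases hj : 2 * (j : ℕ) = r' <;> simp [v, hj, hzw j]
    have hvw : v ≤ w := fun j => by
      by_cases hj : 2 * (j : ℕ) = r' <;> simp [v, hj, hzw j]
    have hv : v ∈ cornerCutCube d L := cornerCutCube_ordConnected.out hz hw ⟨hzv, hvw⟩
    have hfirst := ih (by omega) hv hzv fun j hj => by
      by_cases hj' : 2 * (j : ℕ) = r'
      · simp [v, hj'] at hj
      · have := hsupp j (by simpa [v, hj'] using hj)
        omega
    have hport : (gccGraph d L).edist (.inl (⟨v, hv⟩, ⟨r', by omega⟩))
        (.inl (⟨w, hw⟩, ⟨r', by omega⟩)) ≤ (6 * d * l1Dist v w : ℕ) := by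
      by_cases hport : ∃ i : Fin d, 2 * (i : ℕ) = r'
      · obtain ⟨i, rfl⟩ := hport
        have hoff : ∀ j ≠ i, v j = w j := fun j hj => by
          simp [v, Fin.val_ne_of_ne hj]
        refine gccGraph_edist_port_le i _ hv hw hoff ?_
        rw [l1Dist_eq_natAbs_of_forall_ne i hoff]
        have : v i ≤ w i := hvw i
        omega
      · have hvw' : (⟨v, hv⟩ : cornerCutCube d L) = ⟨w, hw⟩ :=
          Subtype.ext <| funext fun j => by simp only [v, if_neg fun h => hport ⟨j, h⟩]
        simp [hvw']
    have hring := (gccGraph_adj_ring_succ ⟨w, hw⟩ (r := r') hr').edist_le_one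
    refine edist_le_of_le_add (edist_le_of_le_add hfirst hport le_rfl) hring ?_
    rw [← l1Dist_add_l1Dist_of_le hzv hvw, Nat.mul_add]
    omega

theorem gccGraph_edist_revolution_le {z w : Fin d → ℤ} (hz : z ∈ cornerCutCube d L)
    (hw : w ∈ cornerCutCube d L) (hzw : z ≤ w) (p : Fin (2 * d)) :
    (gccGraph d L).edist (.inl (⟨z, hz⟩, p)) (.inl (⟨w, hw⟩, p)) ≤
      (6 * d * l1Dist z w + 2 * d : ℕ) := by
  have hd : 0 < d := by have := p.pos; omega
  let v : Fin d → ℤ := fun j => if (p : ℕ) ≤ 2 * j then w j else z j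
  have hzv : z ≤ v := fun j => by
    by_cases hj : (p : ℕ) ≤ 2 * j <;> simp [v, hj, hzw j]
  have hvw : v ≤ w := fun j => by
    by_cases hj : (p : ℕ) ≤ 2 * j <;> simp [v, hj, hzw j]
  have hv : v ∈ cornerCutCube d L := cornerCutCube_ordConnected.out hz hw ⟨hzv, hvw⟩
  have hup := gccGraph_edist_sweep_le (r := p) (r' := 2 * d - 1) (by omega) (by omega)
    hz hv hzv fun j hj => by
      by_cases hpj : (p : ℕ) ≤ 2 * j
      · exact ⟨hpj, by omega⟩
      · simp [v, hpj] at hj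
  have hwrap := (gccGraph_adj_ring_wrap ⟨v, hv⟩ hd).edist_le_one
  have hrest := gccGraph_edist_sweep_le (r := 0) (Nat.zero_le _) p.isLt hv hw hvw
    fun j hj => by
      by_cases hpj : (p : ℕ) ≤ 2 * j
      · simp [v, hpj] at hj
      · exact ⟨Nat.zero_le _, by omega⟩
  refine edist_le_of_le_add (edist_le_of_le_add hup hwrap le_rfl) hrest ?_
  rw [← l1Dist_add_l1Dist_of_le hzv hvw, Nat.mul_add]
  omega

theorem gccGraph_edist_ring_le {z : Fin d → ℤ} (hz : z ∈ cornerCutCube d L)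
    (p q : Fin (2 * d)) : (gccGraph d L).edist (.inl (⟨z, hz⟩, p)) (.inl (⟨z, hz⟩, q)) ≤ d := by
  wlog hpq : p ≤ q generalizing p q
  · rw [edist_comm]
    exact this q p (le_of_not_ge hpq)
  have hd : 0 < d := by have := p.pos; omega
  have hforward : ∀ {r r' : ℕ} (hrr' : r ≤ r') (hr' : r' < 2 * d),
      (gccGraph d L).edist (.inl (⟨z, hz⟩, ⟨r, by omega⟩)) (.inl (⟨z, hz⟩, ⟨r', hr'⟩)) ≤
        (r' - r : ℕ) := fun hrr' hr' => by
    simpa [l1Dist_self] using gccGraph_edist_sweep_le hrr' hr' hz hz le_rfl (by simp)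
  by_cases hshort : (q : ℕ) - p ≤ d
  · exact (hforward hpq q.isLt).trans (by exact_mod_cast hshort)
  · rw [edist_comm]
    have hwrap := (gccGraph_adj_ring_wrap ⟨z, hz⟩ hd).edist_le_one
    have htail := hforward (r := q) (r' := 2 * d - 1) (by omega) (by omega)
    exact edist_le_of_le_add (edist_le_of_le_add htail hwrap le_rfl)
      (hforward (Nat.zero_le p) p.isLt) (by omega)

theorem gccGraph_edist_le {x y : Fin d → ℤ} (hx : x ∈ cornerCutCube d L)
    (hy : y ∈ cornerCutCube d L) (p q : Fin (2 * d)) :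
    (gccGraph d L).edist (.inl (⟨x, hx⟩, p)) (.inl (⟨y, hy⟩, q)) ≤
      (6 * d * l1Dist x y + 5 * d : ℕ) := by
  have hxy := cornerCutCube_supClosed hx hy
  have hup := gccGraph_edist_revolution_le hx hxy le_sup_left p
  have hdown := gccGraph_edist_revolution_le hy hxy le_sup_right p
  rw [edist_comm] at hdown
  refine edist_le_of_le_add (edist_le_of_le_add hup hdown le_rfl)
    (gccGraph_edist_ring_le hy p q) ?_
  rw [← l1Dist_sup_add_l1Dist_sup x y, Nat.mul_add]
  omega

end

theorem gcc_distance_bounds_general (d L : ℕ)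
    (x y : ↥(cornerCutCube d L)) (p q : Fin (2 * d)) :
    6 * (d : ℤ) * (∑ i, |(x : Fin d → ℤ) i - (y : Fin d → ℤ) i|) - 1 ≤
        ((gccGraph d L).dist (Sum.inl (x, p)) (Sum.inl (y, q)) : ℤ) ∧
      ((gccGraph d L).dist (Sum.inl (x, p)) (Sum.inl (y, q)) : ℤ) ≤
        6 * (d : ℤ) * (∑ i, |(x : Fin d → ℤ) i - (y : Fin d → ℤ) i|) + 5 * d := by
  have hedist := gccGraph_edist_le x.2 y.2 p q
  have hreach : (gccGraph d L).Reachable (.inl (x, p)) (.inl (y, q)) :=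
    edist_ne_top_iff_reachable.mp (ne_top_of_le_ne_top (ENat.natCast_ne_top _) hedist)
  have hdist :
      (gccGraph d L).dist (.inl (x, p)) (.inl (y, q)) ≤ 6 * d * l1Dist x.1 y.1 + 5 * d := by
    rw [← ENat.natCast_le_natCast, hreach.coe_dist_eq_edist]
    exact hedist
  rw [← natCast_l1Dist]
  exact ⟨six_mul_l1Dist_sub_one_le_gccGraph_dist x.2 y.2 p q hreach, by exact_mod_cast hdist⟩

/-- In the grid-connected-cycles graph built over
`H = {x ∈ ℤ^d : 0 ≤ xᵢ ≤ L, x₁ + ⋯ + x_d ≥ L}`, the distance between any two ring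
nodes `x(p^±)` and `y(q^±)` satisfies
`6d·‖x − y‖₁ − 1 ≤ dist ≤ 6d·‖x − y‖₁ + 5d`. -/
theorem gcc_distance_bounds (d L : ℕ) (hd : 2 ≤ d) (hL : 1 ≤ L)
    (x y : ↥(cornerCutCube d L)) (p q : Fin (2 * d)) :
    6 * (d : ℤ) * (∑ i, |(x : Fin d → ℤ) i - (y : Fin d → ℤ) i|) - 1 ≤
        ((gccGraph d L).dist (Sum.inl (x, p)) (Sum.inl (y, q)) : ℤ) ∧
      ((gccGraph d L).dist (Sum.inl (x, p)) (Sum.inl (y, q)) : ℤ) ≤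
        6 * (d : ℤ) * (∑ i, |(x : Fin d → ℤ) i - (y : Fin d → ℤ) i|) + 5 * d :=
  gcc_distance_bounds_general d L x y p q
end
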